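/- Let 1 ≤ p < ∞ and let φ ∈ G_p. Fix m₀ ∈ ℤ and N₀ ∈ ℕ, and let ξ^{m₀,N₀} be the characteristic sequence of S_{m₀,N₀} (equal to 1 on S_{m₀,N₀} and 0 elsewhere). Then there exists C > 0, independent of m₀ and N₀, such that 1/(2 φ(2N₀+1)) ≤ ‖ξ^{m₀,N₀}‖_{wℓ^p_φ} ≤ C/φ(2N₀+1). -/

import Mathlib

open scoped ENNReal NNReal BigOperators

/-- The discrete "ball" `S_{m,N} = {m-N, …, m+N}` as a finite set of integers. -/
noncomputable def S (m : ℤ) (N : ℕ) : Finset ℤ := Finset.Icc (m - N) (m + N)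

open Classical in
/-- The cardinality of `{k ∈ S_{m,N} : |x_k| > γ}`. -/
noncomputable def weakCard (x : ℤ → ℂ) (m : ℤ) (N : ℕ) (γ : ℝ≥0) : ℕ :=
  ((S m N).filter (fun k => γ < ‖x k‖₊)).card

/-- The generalized weak type discrete Morrey norm `‖x‖_{wℓ^p_φ}`. -/
noncomputable def wgMorreyNorm (p : ℝ) (φ : ℕ → ℝ) (x : ℤ → ℂ) : ℝ≥0∞ :=
  ⨆ (m : ℤ) (N : ℕ) (γ : ℝ≥0) (_ : 0 < γ),
    (ENNReal.ofReal (φ (2 * N + 1)))⁻¹ * (γ : ℝ≥0∞) *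
      ((weakCard x m N γ : ℝ≥0∞) / (2 * (N : ℝ≥0∞) + 1)) ^ (1 / p)

/-! Only levels `γ < 1` see the indicator of `S_{m₀,N₀}`, and then they count
`S_{m,N} ∩ S_{m₀,N₀}`; the level `γ = 1/2` on `S_{m₀,N₀}` itself gives the lower bound.
For the upper bound the density `|S_{m,N} ∩ S_{m₀,N₀}| / (2N+1)` is at most `1`, which
suffices when `N ≤ N₀` since `φ` is almost decreasing, and at most `(2N₀+1)/(2N+1)`,
which suffices when `N₀ ≤ N` since `t ^ (1/p) φ(t)` is almost increasing. -/

lemma card_S (m : ℤ) (N : ℕ) : (S m N).card = 2 * N + 1 := by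
  simp only [S, Int.card_Icc]
  omega

lemma le_wgMorreyNorm (p : ℝ) (φ : ℕ → ℝ) (x : ℤ → ℂ) (m : ℤ) (N : ℕ) {γ : ℝ≥0} (hγ : 0 < γ) :
    (ENNReal.ofReal (φ (2 * N + 1)))⁻¹ * (γ : ℝ≥0∞) *
      ((weakCard x m N γ : ℝ≥0∞) / (2 * (N : ℝ≥0∞) + 1)) ^ (1 / p) ≤ wgMorreyNorm p φ x :=
  le_iSup_of_le m <| le_iSup_of_le N <| le_iSup_of_le γ <| le_iSup_of_le hγ le_rfl

lemma wgMorreyNorm_le {p : ℝ} {φ : ℕ → ℝ} {x : ℤ → ℂ} {B : ℝ≥0∞}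
    (h : ∀ (m : ℤ) (N : ℕ) (γ : ℝ≥0), 0 < γ → (ENNReal.ofReal (φ (2 * N + 1)))⁻¹ * (γ : ℝ≥0∞) *
      ((weakCard x m N γ : ℝ≥0∞) / (2 * (N : ℝ≥0∞) + 1)) ^ (1 / p) ≤ B) :
    wgMorreyNorm p φ x ≤ B :=
  iSup_le fun m => iSup_le fun N => iSup_le fun γ => iSup_le (h m N γ)

lemma natCast_div_rpow_eq_ofReal (n N : ℕ) {q : ℝ} (hq : 0 ≤ q) :
    ((n : ℝ≥0∞) / (2 * (N : ℝ≥0∞) + 1)) ^ q = ENNReal.ofReal (((n : ℝ) / (2 * N + 1)) ^ q) := by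
  rw [← ENNReal.ofReal_rpow_of_nonneg (by positivity) hq,
    ENNReal.ofReal_div_of_pos (by positivity)]
  norm_cast

section indicator

variable (A : Finset ℤ) (m : ℤ) (N : ℕ) {γ : ℝ≥0}

lemma weakCard_indicator_of_lt_one (hγ : γ < 1) :
    weakCard (fun k => if k ∈ A then (1 : ℂ) else 0) m N γ = (S m N ∩ A).card := by
  rw [weakCard]
  congr 1
  ext k
  by_cases hk : k ∈ A <;> simp [hk, hγ]

lemma weakCard_indicator_of_one_le (hγ : 1 ≤ γ) :
    weakCard (fun k => if k ∈ A then (1 : ℂ) else 0) m N γ = 0 := by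
  rw [weakCard, Finset.card_eq_zero, Finset.filter_eq_empty_iff]
  intro k _
  by_cases hk : k ∈ A <;> simp [hk, hγ]

end indicator

section density

variable {p : ℝ} {φ : ℕ → ℝ} {N N₀ : ℕ} {k : ℝ}

lemma rpow_density_div_le_of_almostDecreasing (hp : 0 < p) {C : ℝ} (hC : 0 < C)
    (hφ₀ : 0 < φ (2 * N₀ + 1)) (hdec : C * φ (2 * N₀ + 1) ≤ φ (2 * N + 1))
    (hk : 0 ≤ k) (hkN : k ≤ 2 * N + 1) :
    (k / (2 * N + 1)) ^ (1 / p) / φ (2 * N + 1) ≤ C⁻¹ / φ (2 * N₀ + 1) := by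
  have hρ : (k / (2 * N + 1)) ^ (1 / p) ≤ 1 :=
    Real.rpow_le_one (by positivity) ((div_le_one (by positivity)).2 hkN) (by positivity)
  calc (k / (2 * N + 1)) ^ (1 / p) / φ (2 * N + 1)
      ≤ 1 / φ (2 * N + 1) := by gcongr; exact ((mul_pos hC hφ₀).trans_le hdec).le
    _ ≤ 1 / (C * φ (2 * N₀ + 1)) := one_div_le_one_div_of_le (by positivity) hdec
    _ = C⁻¹ / φ (2 * N₀ + 1) := by rw [one_div, mul_inv, div_eq_mul_inv]

lemma rpow_density_div_le_of_almostIncreasing (hp : 0 < p) {C : ℝ}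
    (hφ : 0 < φ (2 * N + 1)) (hφ₀ : 0 < φ (2 * N₀ + 1))
    (hinc : (2 * (N₀ : ℝ) + 1) ^ (1 / p) * φ (2 * N₀ + 1) ≤
      C * ((2 * (N : ℝ) + 1) ^ (1 / p) * φ (2 * N + 1)))
    (hk : 0 ≤ k) (hkN₀ : k ≤ 2 * N₀ + 1) :
    (k / (2 * N + 1)) ^ (1 / p) / φ (2 * N + 1) ≤ C / φ (2 * N₀ + 1) := by
  calc (k / (2 * N + 1)) ^ (1 / p) / φ (2 * N + 1)
      ≤ ((2 * N₀ + 1) / (2 * N + 1)) ^ (1 / p) / φ (2 * N + 1) := by gcongr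
    _ = (2 * (N₀ : ℝ) + 1) ^ (1 / p) / ((2 * (N : ℝ) + 1) ^ (1 / p) * φ (2 * N + 1)) := by
      rw [Real.div_rpow (by positivity) (by positivity), div_div]
    _ ≤ C / φ (2 * N₀ + 1) := by
      rw [div_le_div_iff₀ (by positivity) hφ₀]
      linarith

end density

lemma ofReal_inv_two_mul_le_wgMorreyNorm_indicator (p : ℝ) (φ : ℕ → ℝ) (m₀ : ℤ) (N₀ : ℕ) :
    ENNReal.ofReal (1 / (2 * φ (2 * N₀ + 1))) ≤
      wgMorreyNorm p φ (fun k => if k ∈ S m₀ N₀ then (1 : ℂ) else 0) := by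
  refine le_trans ?_ (le_wgMorreyNorm p φ _ m₀ N₀ (γ := 2⁻¹) (by norm_num))
  rw [weakCard_indicator_of_lt_one _ _ _ (by norm_num), Finset.inter_self, card_S]
  push_cast
  rw [ENNReal.div_self (by positivity) (by finiteness), ENNReal.one_rpow, mul_one, one_div, mul_inv,
    ENNReal.ofReal_mul (by norm_num), mul_comm]
  gcongr
  · exact ENNReal.ofReal_inv_le
  · simp

lemma wgMorreyNorm_indicator_le {p : ℝ} (hp : 0 < p) {φ : ℕ → ℝ}
    (hφpos : ∀ N : ℕ, 0 < φ (2 * N + 1)) {C₁ C₂ : ℝ} (hC₁ : 0 < C₁)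
    (hdec : ∀ M N : ℕ, M ≤ N → C₁ * φ (2 * N + 1) ≤ φ (2 * M + 1))
    (hinc : ∀ M N : ℕ, M ≤ N →
      (2 * (M : ℝ) + 1) ^ (1 / p) * φ (2 * M + 1) ≤
        C₂ * ((2 * (N : ℝ) + 1) ^ (1 / p) * φ (2 * N + 1)))
    (m₀ : ℤ) (N₀ : ℕ) :
    wgMorreyNorm p φ (fun k => if k ∈ S m₀ N₀ then (1 : ℂ) else 0) ≤
      ENNReal.ofReal (max C₁⁻¹ C₂ / φ (2 * N₀ + 1)) := by
  refine wgMorreyNorm_le fun m N γ _ => ?_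
  rcases lt_or_ge γ 1 with hγ | hγ
  · rw [weakCard_indicator_of_lt_one _ _ _ hγ, natCast_div_rpow_eq_ofReal _ _ (by positivity)]
    set k := (S m N ∩ S m₀ N₀).card
    have hkN : (k : ℝ) ≤ 2 * N + 1 := by
      exact_mod_cast (Finset.card_le_card Finset.inter_subset_left).trans (card_S m N).le
    have hkN₀ : (k : ℝ) ≤ 2 * N₀ + 1 := by
      exact_mod_cast (Finset.card_le_card Finset.inter_subset_right).trans (card_S m₀ N₀).le
    have hdensity : ((k : ℝ) / (2 * N + 1)) ^ (1 / p) / φ (2 * N + 1) ≤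
        max C₁⁻¹ C₂ / φ (2 * N₀ + 1) := by
      have hφ₀ := hφpos N₀
      rcases le_total N N₀ with hN | hN
      · exact (rpow_density_div_le_of_almostDecreasing hp hC₁ hφ₀ (hdec N N₀ hN)
          k.cast_nonneg hkN).trans (by gcongr; exact le_max_left _ _)
      · exact (rpow_density_div_le_of_almostIncreasing hp (hφpos N) hφ₀ (hinc N₀ N hN)
          k.cast_nonneg hkN₀).trans (by gcongr; exact le_max_right _ _)
    calc (ENNReal.ofReal (φ (2 * N + 1)))⁻¹ * γ * ENNReal.ofReal ((k / (2 * N + 1)) ^ (1 / p))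
        ≤ (ENNReal.ofReal (φ (2 * N + 1)))⁻¹ * 1 *
            ENNReal.ofReal ((k / (2 * N + 1)) ^ (1 / p)) := by
          gcongr
          exact_mod_cast hγ.le
      _ = ENNReal.ofReal (((k : ℝ) / (2 * N + 1)) ^ (1 / p) / φ (2 * N + 1)) := by
          rw [mul_one, ← ENNReal.ofReal_inv_of_pos (hφpos N),
            ← ENNReal.ofReal_mul (inv_nonneg.2 (hφpos N).le), inv_mul_eq_div]
      _ ≤ ENNReal.ofReal (max C₁⁻¹ C₂ / φ (2 * N₀ + 1)) := ENNReal.ofReal_le_ofReal hdensity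
  · rw [weakCard_indicator_of_one_le _ _ _ hγ, Nat.cast_zero, ENNReal.zero_div,
      ENNReal.zero_rpow_of_pos (by positivity), mul_zero]
    exact zero_le

theorem stmt16 (p : ℝ) (hp : 1 ≤ p) (φ : ℕ → ℝ)
    (hφpos : ∀ N : ℕ, 0 < φ (2 * N + 1))
    (hdec : ∃ C : ℝ, 0 < C ∧ ∀ M N : ℕ, M ≤ N → C * φ (2 * N + 1) ≤ φ (2 * M + 1))
    (hinc : ∃ C : ℝ, 0 < C ∧ ∀ M N : ℕ, M ≤ N →
      (2 * (M : ℝ) + 1) ^ (1 / p) * φ (2 * M + 1) ≤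
        C * ((2 * (N : ℝ) + 1) ^ (1 / p) * φ (2 * N + 1)))
 :
    ∃ C : ℝ, 0 < C ∧ ∀ (m₀ : ℤ) (N₀ : ℕ),
      ENNReal.ofReal (1 / (2 * φ (2 * N₀ + 1))) ≤
          wgMorreyNorm p φ (fun k => if k ∈ S m₀ N₀ then (1 : ℂ) else 0) ∧
        wgMorreyNorm p φ (fun k => if k ∈ S m₀ N₀ then (1 : ℂ) else 0) ≤
          ENNReal.ofReal (C / φ (2 * N₀ + 1)) := by
  obtain ⟨C₁, hC₁, hdec⟩ := hdec
  obtain ⟨C₂, -, hinc⟩ := hinc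
  refine ⟨max C₁⁻¹ C₂, lt_max_of_lt_left (inv_pos.2 hC₁), fun m₀ N₀ => ⟨?_, ?_⟩⟩
  · exact ofReal_inv_two_mul_le_wgMorreyNorm_indicator p φ m₀ N₀
  · exact wgMorreyNorm_indicator_le (by linarith) hφpos hC₁ hdec hinc m₀ N₀
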